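/- arXiv:1902.05011 — 4 statements merged into one kernel-verified Lean document; each statement's English description precedes it below -/
import Mathlib

section
/- A subidempotent commutative residuated lattice is integral (i.e., e is its greatest element) if and only if its monoid multiplication coincides with its lattice meet: x·y = x ∧ y for all x, y. -/
/-- A commutative residuated lattice: a lattice and commutative monoid with a
residual `arrow` satisfying `x * y ≤ z ↔ x ≤ arrow y z`. -/
class CRL (α : Type*) extends Lattice α, CommMonoid α where
  arrow : α → α → α
  resid : ∀ x y z : α, x * y ≤ z ↔ x ≤ arrow y z

open CRL

/-- A subidempotent commutative residuated lattice. -/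
class SRL (α : Type*) extends CRL α where
  subidem : ∀ x : α, x ≤ 1 → x * x = x

theorem integral_iff_mul_eq_inf {α : Type*} [SRL α] :
    (∀ x : α, x ≤ 1) ↔ (∀ x y : α, x * y = x ⊓ y) := by
  have mono : ∀ a b c : α, a ≤ b → a * c ≤ b * c := by
    intro a b c hab
    exact (resid a c (b * c)).mpr (le_trans hab ((resid b c (b * c)).mp le_rfl))
  constructor
  · intro h x y
    apply le_antisymm
    · refine le_inf ?_ ((mono x 1 y (h x)).trans_eq (one_mul y))
      rw [mul_comm]
      exact (mono y 1 x (h y)).trans_eq (one_mul x)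
    · calc x ⊓ y = (x ⊓ y) * (x ⊓ y) := (SRL.subidem _ (le_trans inf_le_left (h x))).symm
        _ ≤ x * y := le_trans (mono _ x _ inf_le_left) (by rw [mul_comm x (x ⊓ y), mul_comm x y]; exact mono _ y _ inf_le_right)
  · intro h x
    have : x * 1 = x ⊓ 1 := h x 1
    rw [mul_one] at this
    exact this.le.trans inf_le_right
end

section
/- The negative cone of an SRL is a Brouwerian algebra: for an SRL A, the set A⁻ = {a ∈ A : a ≤ e}, equipped with the restricted lattice operations and the operation a →⁻ b = (a→b) ∧ e, is an integral commutative residuated lattice in which multiplication is meet; in particular, for all a, b, c ∈ A⁻, a ∧ b ≤ c if and only if a ≤ (b→c) ∧ e. -/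
open CRL

private lemma crl_mul_le_mul {α : Type*} [CRL α] {x y : α} (h : x ≤ y) (z : α) :
    x * z ≤ y * z := by
  have h1 : y ≤ arrow z (y * z) := (resid y z (y * z)).mp le_rfl
  exact (resid x z (y * z)).mpr (le_trans h h1)

private lemma neg_mul_eq_inf {α : Type*} [SRL α] {a b : α} (ha : a ≤ 1) (hb : b ≤ 1) :
    a * b = a ⊓ b := by
  apply le_antisymm
  · apply le_inf
    · calc a * b ≤ a * 1 := by
            rw [mul_comm a b, mul_comm a 1]; exact crl_mul_le_mul hb a
        _ = a := mul_one a
    · calc a * b ≤ 1 * b := crl_mul_le_mul ha b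
        _ = b := one_mul b
  · have h := SRL.subidem (a ⊓ b) (le_trans inf_le_left ha)
    calc a ⊓ b = (a ⊓ b) * (a ⊓ b) := h.symm
      _ ≤ a * b := le_trans (crl_mul_le_mul inf_le_left _)
          (by rw [mul_comm a (a ⊓ b), mul_comm a b]; exact crl_mul_le_mul inf_le_right a)

/-- The negative cone of an SRL is a Brouwerian algebra: it is closed under the
operations, 1 is its top element, meet plays the role of multiplication, and
`(arrow b c) ⊓ 1` residuates the meet. -/
theorem negative_cone_brouwerian {α : Type*} [SRL α] :
    (∀ a b : α, a ≤ 1 → b ≤ 1 → a * b = a ⊓ b) ∧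
    (∀ a b c : α, a ≤ 1 → b ≤ 1 → c ≤ 1 →
      (a ⊓ b ≤ c ↔ a ≤ CRL.arrow b c ⊓ 1)) := by
  refine ⟨fun a b ha hb => neg_mul_eq_inf ha hb, fun a b c ha hb _hc => ?_⟩
  constructor
  · intro h
    exact le_inf ((resid a b c).mp (by rw [neg_mul_eq_inf ha hb]; exact h)) ha
  · intro h
    have := (resid a b c).mpr (le_trans h inf_le_left)
    rwa [neg_mul_eq_inf ha hb] at this
end

section
/- Prime Filter Extension: if K is a sublattice of a distributive lattice L, then the prime filters of K are exactly the nonempty sets of the form K ∩ F, where F is a prime filter of L. -/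
/-- `P` is a prime filter of the sublattice `K` of `L`. -/
def IsPrimeFilterOfSublattice {L : Type*} [Lattice L] (K P : Set L) : Prop :=
  P ⊆ K ∧ P.Nonempty ∧
    (∀ a b : L, a ∈ P → b ∈ K → a ≤ b → b ∈ P) ∧
    (∀ a b : L, a ∈ P → b ∈ P → a ⊓ b ∈ P) ∧
    (∀ a b : L, a ∈ K → b ∈ K → a ⊔ b ∈ P → a ∈ P ∨ b ∈ P)

theorem prime_filter_extension {L : Type*} [DistribLattice L] (K : Set L)
    (hK : ∀ a b : L, a ∈ K → b ∈ K → a ⊓ b ∈ K ∧ a ⊔ b ∈ K) (P : Set L) :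
    IsPrimeFilterOfSublattice K P ↔
      (P.Nonempty ∧ ∃ F : Set L, F.Nonempty ∧
        (∀ a b : L, a ∈ F → a ≤ b → b ∈ F) ∧
        (∀ a b : L, a ∈ F → b ∈ F → a ⊓ b ∈ F) ∧
        (∀ a b : L, a ⊔ b ∈ F → a ∈ F ∨ b ∈ F) ∧ P = K ∩ F) := by
  constructor
  · rintro ⟨hsub, hne, hup, hmeet, hprime⟩
    refine ⟨hne, ?_⟩
    -- The collection of filters of `L` containing `P` and avoiding the downset of `K \ P`.
    set C : Set (Set L) := {F | P ⊆ F ∧ (∀ a b : L, a ∈ F → a ≤ b → b ∈ F) ∧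
      (∀ a b : L, a ∈ F → b ∈ F → a ⊓ b ∈ F) ∧
      (∀ x ∈ F, ∀ y ∈ K, x ≤ y → y ∈ P)} with hC
    -- The upward closure of `P` lies in `C`.
    have hF0 : {x : L | ∃ p ∈ P, p ≤ x} ∈ C := by
      refine ⟨fun p hp => ⟨p, hp, le_rfl⟩, ?_, ?_, ?_⟩
      · rintro a b ⟨p, hp, hpa⟩ hab; exact ⟨p, hp, hpa.trans hab⟩
      · rintro a b ⟨p, hp, hpa⟩ ⟨q, hq, hqb⟩
        exact ⟨p ⊓ q, hmeet p q hp hq, inf_le_inf hpa hqb⟩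
      · rintro x ⟨p, hp, hpx⟩ y hy hxy
        exact hup p y hp hy (hpx.trans hxy)
    -- Zorn's lemma applies.
    obtain ⟨F, hF0F, hFC, hFmax⟩ := zorn_subset_nonempty C (fun c hcC hchain hcne => by
      obtain ⟨G, hG⟩ := hcne
      refine ⟨⋃₀ c, ⟨fun p hp => Set.mem_sUnion.2 ⟨G, hG, (hcC hG).1 hp⟩, ?_, ?_, ?_⟩,
        fun s hs => Set.subset_sUnion_of_mem hs⟩
      · rintro a b ⟨S, hS, haS⟩ hab; exact ⟨S, hS, (hcC hS).2.1 a b haS hab⟩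
      · rintro a b ⟨S, hS, haS⟩ ⟨T, hT, hbT⟩
        rcases hchain.total hS hT with h | h
        · exact ⟨T, hT, (hcC hT).2.2.1 a b (h haS) hbT⟩
        · exact ⟨S, hS, (hcC hS).2.2.1 a b haS (h hbT)⟩
      · rintro x ⟨S, hS, hxS⟩ y hy hxy; exact (hcC hS).2.2.2 x hxS y hy hxy) _ hF0
    obtain ⟨hPF0, hFup, hFmeet, hFavoid⟩ := hFC
    have hPF : P ⊆ F := fun p hp => hF0F ⟨p, hp, le_rfl⟩
    -- `F` is prime.
    have hFprime : ∀ a b : L, a ⊔ b ∈ F → a ∈ F ∨ b ∈ F := by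
      intro a b hab
      by_contra h
      push_neg at h
      obtain ⟨haF, hbF⟩ := h
      -- enlarge `F` by `a` : it must leave `C`.
      have key : ∀ z : L, z ∉ F → ∃ f ∈ F, ∃ y ∈ K, y ∉ P ∧ f ⊓ z ≤ y := by
        intro z hz
        by_contra hcon
        push_neg at hcon
        have hzmem : z ∈ {x : L | ∃ f ∈ F, f ⊓ z ≤ x} := ⟨a ⊔ b, hab, inf_le_right⟩
        have hmem : {x : L | ∃ f ∈ F, f ⊓ z ≤ x} ∈ C := by
          refine ⟨fun p hp => ⟨p, hPF hp, inf_le_left.trans le_rfl⟩, ?_, ?_, ?_⟩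
          · rintro u v ⟨f, hf, hfu⟩ huv; exact ⟨f, hf, hfu.trans huv⟩
          · rintro u v ⟨f, hf, hfu⟩ ⟨g, hg, hgv⟩
            exact ⟨f ⊓ g, hFmeet f g hf hg, by
              calc f ⊓ g ⊓ z ≤ (f ⊓ z) ⊓ (g ⊓ z) :=
                    le_inf (inf_le_inf_right z inf_le_left)
                      (inf_le_inf_right z inf_le_right)
                _ ≤ u ⊓ v := inf_le_inf hfu hgv⟩
          · rintro x ⟨f, hf, hfx⟩ y hy hxy
            by_contra hyP
            exact hyP (by
              by_contra hyP'
              exact hyP' (False.elim (hyP ((fun h => h) (by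
                have := hcon f hf y hy
                exact absurd (hfx.trans hxy) (by
                  intro hle
                  by_cases hyP'' : y ∈ P
                  · exact hyP hyP''
                  · exact (this hyP'') hle))))))
        have hsub' : F ⊆ {x : L | ∃ f ∈ F, f ⊓ z ≤ x} :=
          fun x hx => ⟨x, hx, inf_le_left⟩
        have := hFmax hmem hsub' hzmem
        obtain ⟨f, hf, hfz⟩ := hzmem
        exact hz this
      obtain ⟨f₁, hf₁, y₁, hy₁K, hy₁P, hle₁⟩ := key a haF
      obtain ⟨f₂, hf₂, y₂, hy₂K, hy₂P, hle₂⟩ := key b hbF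
      have hy12K : y₁ ⊔ y₂ ∈ K := (hK y₁ y₂ hy₁K hy₂K).2
      have hy12P : y₁ ⊔ y₂ ∉ P := by
        intro h
        rcases hprime y₁ y₂ hy₁K hy₂K h with h' | h'
        · exact hy₁P h'
        · exact hy₂P h'
      have hxF : f₁ ⊓ f₂ ⊓ (a ⊔ b) ∈ F :=
        hFmeet _ _ (hFmeet f₁ f₂ hf₁ hf₂) hab
      have hle : f₁ ⊓ f₂ ⊓ (a ⊔ b) ≤ y₁ ⊔ y₂ := by
        rw [inf_sup_left]
        refine sup_le_sup ?_ ?_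
        · exact le_trans (inf_le_inf_right a inf_le_left) hle₁
        · exact le_trans (inf_le_inf_right b inf_le_right) hle₂
      exact hy12P (hFavoid _ hxF _ hy12K hle)
    refine ⟨F, hne.mono hPF, hFup, hFmeet, hFprime, ?_⟩
    ext x
    constructor
    · intro hx; exact ⟨hsub hx, hPF hx⟩
    · rintro ⟨hxK, hxF⟩; exact hFavoid x hxF x hxK le_rfl
  · rintro ⟨hne, F, hFne, hFup, hFmeet, hFprime, rfl⟩
    refine ⟨Set.inter_subset_left, hne, ?_, ?_, ?_⟩
    · rintro a b ⟨haK, haF⟩ hbK hab; exact ⟨hbK, hFup a b haF hab⟩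
    · rintro a b ⟨haK, haF⟩ ⟨hbK, hbF⟩
      exact ⟨(hK a b haK hbK).1, hFmeet a b haF hbF⟩
    · rintro a b haK hbK ⟨_, habF⟩
      rcases hFprime a b habF with h | h
      · exact Or.inl ⟨haK, h⟩
      · exact Or.inr ⟨hbK, h⟩
end

section
/- Let A be an SRL and F a lattice filter of its negative cone A⁻. Then the deductive filter of A generated by F is exactly the up-set {a ∈ A : ∃ b ∈ F, b ≤ a}, and consequently A⁻ ∩ Fg^A(F) = F. -/
open CRL

def IsDeductiveFilter {α : Type*} [SRL α] (F : Set α) : Prop :=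
  (1 : α) ∈ F ∧ (∀ a b : α, a ∈ F → a ≤ b → b ∈ F) ∧
    (∀ a b : α, a ∈ F → b ∈ F → a ⊓ b ∈ F)

def Fg {α : Type*} [SRL α] (X : Set α) : Set α :=
  ⋂₀ {G : Set α | IsDeductiveFilter G ∧ X ⊆ G}

theorem fg_of_cone_filter {α : Type*} [SRL α] (F : Set α)
    (hcone : ∀ a ∈ F, a ≤ (1 : α)) (hne : F.Nonempty)
    (hup : ∀ a b : α, a ∈ F → b ≤ 1 → a ≤ b → b ∈ F)
    (hinf : ∀ a b : α, a ∈ F → b ∈ F → a ⊓ b ∈ F) :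
    Fg F = {a : α | ∃ b ∈ F, b ≤ a} ∧ {a : α | a ≤ 1} ∩ Fg F = F := by
  obtain ⟨b₀, hb₀⟩ := hne
  have hG : IsDeductiveFilter {a : α | ∃ b ∈ F, b ≤ a} := by
    refine ⟨⟨b₀, hb₀, hcone b₀ hb₀⟩, ?_, ?_⟩
    · rintro a b ⟨c, hc, hca⟩ hab
      exact ⟨c, hc, hca.trans hab⟩
    · rintro a b ⟨c, hc, hca⟩ ⟨d, hd, hdb⟩
      exact ⟨c ⊓ d, hinf c d hc hd,
        le_inf (inf_le_left.trans hca) (inf_le_right.trans hdb)⟩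
  have hFg : Fg F = {a : α | ∃ b ∈ F, b ≤ a} := by
    apply subset_antisymm
    · intro a ha
      exact ha _ ⟨hG, fun x hx => ⟨x, hx, le_rfl⟩⟩
    · rintro a ⟨c, hc, hca⟩ G ⟨hGd, hFG⟩
      exact hGd.2.1 c a (hFG hc) hca
  refine ⟨hFg, ?_⟩
  rw [hFg]
  ext a
  constructor
  · rintro ⟨ha1, c, hc, hca⟩
    exact hup c a hc ha1 hca
  · exact fun ha => ⟨hcone a ha, a, ha, le_rfl⟩
end
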